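/- arXiv:1905.07570 — 2 statements merged into one kernel-verified Lean document; each statement's English description precedes it below -/
import Mathlib

section
/- For all 1 ≤ l ≤ k < m, the quantities A and B satisfy the recursion B_{l,k+1} = B_{l,k} − A_{k,k+1} + A_{k+1,k+1}. -/
/-!
Compare `B_{l,k}` and `B_{l,k+1}` pair by pair. Since `l ≤ k`, the level
`c_{ij} = max(l, min(k, k_{ij}))` moves (from `k` to `k + 1`) exactly for the pairs with
`k_{ij} ≥ k + 1`, i.e. the pairs of `F_{k+1}`; there the term of `A_{k,k+1}` is traded for that
of `A_{k+1,k+1}`, and every other term is unchanged.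
-/

open Finset

/-- `F_k = {i ∈ F : k_i ≥ k}`. -/
def featSet (F : Finset ℕ) (kk : ℕ → ℕ) (k : ℕ) : Finset ℕ :=
  F.filter (fun i => k ≤ kk i)

/-- `A_{l,k} = Σ_{i,j∈F_k, i<j} ⟨v_i^{(l)}, v_j^{(l)}⟩ x_i x_j`. -/
noncomputable def Asum (F : Finset ℕ) (x : ℕ → ℝ) (kk : ℕ → ℕ) (D : ℕ → ℕ)
    (v : (k : ℕ) → ℕ → Fin (D k) → ℝ) (l k : ℕ) : ℝ :=
  ∑ i ∈ featSet F kk k, ∑ j ∈ (featSet F kk k).filter (fun j => i < j),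
    (∑ f, v l i f * v l j f) * x i * x j

/-- `B_{l,k} = Σ_{i,j∈F, i<j} ⟨v_i^{(c_{ij})}, v_j^{(c_{ij})}⟩ x_i x_j` with
`c_{ij} = max(l, min(k, min(k_i, k_j)))`. -/
noncomputable def Bsum (F : Finset ℕ) (x : ℕ → ℝ) (kk : ℕ → ℕ) (D : ℕ → ℕ)
    (v : (k : ℕ) → ℕ → Fin (D k) → ℝ) (l k : ℕ) : ℝ :=
  ∑ i ∈ F, ∑ j ∈ F.filter (fun j => i < j),
    (∑ f, v (max l (min k (min (kk i) (kk j)))) i f *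
          v (max l (min k (min (kk i) (kk j)))) j f) * x i * x j

theorem Asum_eq_sum_ite (F : Finset ℕ) (x : ℕ → ℝ) (kk : ℕ → ℕ) (D : ℕ → ℕ)
    (v : (k : ℕ) → ℕ → Fin (D k) → ℝ) (l k : ℕ) :
    Asum F x kk D v l k = ∑ i ∈ F, ∑ j ∈ F.filter (fun j => i < j),
      if k ≤ min (kk i) (kk j) then (∑ f, v l i f * v l j f) * x i * x j else 0 := by
  simp only [Asum, featSet, filter_comm (fun i => k ≤ kk i), sum_filter, le_min_iff, ite_and]
  refine sum_congr rfl fun i _ => ?_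
  split_ifs <;> simp

theorem apply_max_min_succ {M : Type*} [AddCommGroup M] (g : ℕ → M) {l k : ℕ} (hlk : l ≤ k)
    (n : ℕ) :
    g (max l (min (k + 1) n))
      = g (max l (min k n)) - (if k + 1 ≤ n then g k else 0)
          + (if k + 1 ≤ n then g (k + 1) else 0) := by
  split_ifs with h
  · rw [show max l (min (k + 1) n) = k + 1 by omega, show max l (min k n) = k by omega]
    abel
  · rw [show max l (min (k + 1) n) = max l (min k n) by omega]
    simp

theorem Bsum_recursion_general (F : Finset ℕ) (x : ℕ → ℝ) (kk : ℕ → ℕ) (D : ℕ → ℕ)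
    (v : (k : ℕ) → ℕ → Fin (D k) → ℝ) (l k : ℕ) (hlk : l ≤ k) :
    Bsum F x kk D v l (k + 1)
      = Bsum F x kk D v l k - Asum F x kk D v k (k + 1)
          + Asum F x kk D v (k + 1) (k + 1) := by
  rw [Bsum, Bsum, Asum_eq_sum_ite, Asum_eq_sum_ite, ← sum_sub_distrib, ← sum_add_distrib]
  refine sum_congr rfl fun i _ => ?_
  rw [← sum_sub_distrib, ← sum_add_distrib]
  refine sum_congr rfl fun j _ => ?_
  exact apply_max_min_succ (fun c => (∑ f, v c i f * v c j f) * x i * x j) hlk _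

/-- For all `1 ≤ l ≤ k < m`: `B_{l,k+1} = B_{l,k} − A_{k,k+1} + A_{k+1,k+1}`. -/
theorem Bsum_recursion
    (F : Finset ℕ) (m : ℕ) (hm : 1 ≤ m) (x : ℕ → ℝ) (kk : ℕ → ℕ)
    (hk : ∀ i ∈ F, 1 ≤ kk i ∧ kk i ≤ m)
    (D : ℕ → ℕ) (hD : ∀ a b, 1 ≤ a → a ≤ b → b ≤ m → D a ≤ D b)
    (v : (k : ℕ) → ℕ → Fin (D k) → ℝ)
    (l k : ℕ) (hl : 1 ≤ l) (hlk : l ≤ k) (hkm : k < m) :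
    Bsum F x kk D v l (k + 1)
      = Bsum F x kk D v l k - Asum F x kk D v k (k + 1)
          + Asum F x kk D v (k + 1) (k + 1) :=
  Bsum_recursion_general F x kk D v l k hlk
end

section
/- For all 1 ≤ l ≤ k < m, the difference B_{l,k+1} − B_{l,k} depends only on the features in F_{k+1}: it equals Σ_{i,j∈F_{k+1}, i<j} ( ⟨v_i^{(k+1)}, v_j^{(k+1)}⟩ − ⟨v_i^{(k)}, v_j^{(k)}⟩ ) x_i x_j. -/
open Finset

theorem Finset.sum_sum_filter_filter_eq_sum_sum_ite {ι : Type*} {M : Type*} [AddCommMonoid M]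
    (s : Finset ι) (p : ι → Prop) [DecidablePred p] (r : ι → ι → Prop)
    [∀ i, DecidablePred (r i)] (f : ι → ι → M) :
    ∑ i ∈ s.filter p, ∑ j ∈ (s.filter p).filter (r i), f i j
      = ∑ i ∈ s, ∑ j ∈ s.filter (r i), if p i ∧ p j then f i j else 0 := by
  rw [sum_filter]
  refine sum_congr rfl fun i _ => ?_
  by_cases hi : p i
  · simp only [hi, true_and, if_true, ← sum_filter, filter_comm]
  · simp only [hi, false_and, if_false, sum_const_zero]

theorem sub_at_max_min_succ {M : Type*} [AddGroup M] (g : ℕ → M) {l k : ℕ} (hlk : l ≤ k)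
    (n : ℕ) :
    g (max l (min (k + 1) n)) - g (max l (min k n)) = if k + 1 ≤ n then g (k + 1) - g k else 0 := by
  split_ifs with hn
  · rw [show max l (min (k + 1) n) = k + 1 by omega, show max l (min k n) = k by omega]
  · rw [show max l (min (k + 1) n) = max l (min k n) by omega, sub_self]

theorem Bsum_diff_on_next_featSet_general
    (F : Finset ℕ) (x : ℕ → ℝ) (kk : ℕ → ℕ)
    (D : ℕ → ℕ)
    (v : (k : ℕ) → ℕ → Fin (D k) → ℝ)
    (l k : ℕ) (hlk : l ≤ k) :
    Bsum F x kk D v l (k + 1) - Bsum F x kk D v l k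
      = ∑ i ∈ featSet F kk (k + 1),
          ∑ j ∈ (featSet F kk (k + 1)).filter (fun j => i < j),
            ((∑ f, v (k + 1) i f * v (k + 1) j f)
              - (∑ f, v k i f * v k j f)) * x i * x j := by
  rw [featSet, sum_sum_filter_filter_eq_sum_sum_ite, Bsum, Bsum, ← sum_sub_distrib]
  refine sum_congr rfl fun i _ => ?_
  rw [← sum_sub_distrib]
  refine sum_congr rfl fun j _ => ?_
  rw [sub_at_max_min_succ (fun c => (∑ f, v c i f * v c j f) * x i * x j) hlk]
  simp only [le_min_iff, sub_mul]

/-- For `1 ≤ l ≤ k < m`, the difference `B_{l,k+1} − B_{l,k}` depends only on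
the features in `F_{k+1}`:
`B_{l,k+1} − B_{l,k}
  = Σ_{i,j∈F_{k+1}, i<j} (⟨v_i^{(k+1)},v_j^{(k+1)}⟩ − ⟨v_i^{(k)},v_j^{(k)}⟩) x_i x_j`. -/
theorem Bsum_diff_on_next_featSet
    (F : Finset ℕ) (m : ℕ) (hm : 1 ≤ m) (x : ℕ → ℝ) (kk : ℕ → ℕ)
    (hk : ∀ i ∈ F, 1 ≤ kk i ∧ kk i ≤ m)
    (D : ℕ → ℕ) (hD : ∀ a b, 1 ≤ a → a ≤ b → b ≤ m → D a ≤ D b)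
    (v : (k : ℕ) → ℕ → Fin (D k) → ℝ)
    (l k : ℕ) (hl : 1 ≤ l) (hlk : l ≤ k) (hkm : k < m) :
    Bsum F x kk D v l (k + 1) - Bsum F x kk D v l k
      = ∑ i ∈ featSet F kk (k + 1),
          ∑ j ∈ (featSet F kk (k + 1)).filter (fun j => i < j),
            ((∑ f, v (k + 1) i f * v (k + 1) j f)
              - (∑ f, v k i f * v k j f)) * x i * x j :=
  Bsum_diff_on_next_featSet_general F x kk D v l k hlk
end
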